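/- arXiv:1901.04080 — 2 statements merged into one kernel-verified Lean document; each statement's English description precedes it below -/
import Mathlib

section
/- Fix coprime integers 1 ≤ k < m. For every integer n ≥ m, d_n = T_{n−m}^{(k,m)}; that is, the division-count sequence is the diagonal-sum sequence shifted by m. -/
open Finset

/-- The sum of the entries of Pascal's triangle `(x, y) ↦ (x+y).choose x`
lying on the diagonal `k*x + m*y = n`. -/
def pascalDiagSum (k m n : ℕ) : ℕ :=
  ∑ x ∈ Finset.range (n + 1), ∑ y ∈ Finset.range (n + 1),
    if k * x + m * y = n then (x + y).choose x else 0

private def diagSet (k m n : ℕ) : Finset (ℕ × ℕ) :=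
  ((Finset.range (n+1)) ×ˢ (Finset.range (n+1))).filter (fun p => k * p.1 + m * p.2 = n)

private lemma mem_diagSet {k m n : ℕ} (hk : 1 ≤ k) (hm : 1 ≤ m) (p : ℕ × ℕ) :
    p ∈ diagSet k m n ↔ k * p.1 + m * p.2 = n := by
  simp only [diagSet, Finset.mem_filter, Finset.mem_product, Finset.mem_range]
  constructor
  · tauto
  · intro h
    refine ⟨⟨?_, ?_⟩, h⟩ <;> nlinarith

private lemma pds_eq (k m n : ℕ) :
    pascalDiagSum k m n = ∑ p ∈ diagSet k m n, (p.1 + p.2).choose p.1 := by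
  rw [pascalDiagSum, diagSet, Finset.sum_filter, Finset.sum_product]

private lemma left_shift (k m n : ℕ) (hk : 1 ≤ k) (hm : 1 ≤ m) :
    (∑ p ∈ diagSet k m n, if 1 ≤ p.1 then (p.1 - 1 + p.2).choose (p.1 - 1) else 0)
      = if k ≤ n then pascalDiagSum k m (n - k) else 0 := by
  rw [Finset.sum_ite, Finset.sum_const_zero, add_zero]
  by_cases hkn : k ≤ n
  · rw [if_pos hkn, pds_eq]
    refine Finset.sum_nbij' (i := fun p => (p.1 - 1, p.2)) (j := fun q => (q.1 + 1, q.2))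
      ?_ ?_ ?_ ?_ ?_
    · rintro ⟨x, y⟩ hp
      simp only [Finset.mem_filter, mem_diagSet hk hm] at hp
      obtain ⟨hpe, hx⟩ := hp
      rw [mem_diagSet hk hm]
      rcases x with _ | a
      · omega
      · simp only [Nat.add_sub_cancel] at *
        have : k * (a + 1) = k * a + k := by ring
        omega
    · rintro ⟨x, y⟩ hq
      rw [mem_diagSet hk hm] at hq
      simp only [Finset.mem_filter, mem_diagSet hk hm]
      have : k * (x + 1) = k * x + k := by ring
      simp only at *
      omega
    · rintro ⟨x, y⟩ hp
      simp only [Finset.mem_filter] at hp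
      simp only [Prod.mk.injEq]
      exact ⟨by omega, trivial⟩
    · rintro ⟨x, y⟩ hq
      simp
    · intro p hp
      rfl
  · rw [if_neg hkn]
    apply Finset.sum_eq_zero
    rintro ⟨x, y⟩ hp
    simp only [Finset.mem_filter, mem_diagSet hk hm] at hp
    obtain ⟨hpe, hx⟩ := hp
    have : k * 1 ≤ k * x := Nat.mul_le_mul_left k (by omega)
    omega

private lemma right_shift (k m n : ℕ) (hk : 1 ≤ k) (hm : 1 ≤ m) :
    (∑ p ∈ diagSet k m n, if 1 ≤ p.2 then (p.1 + (p.2 - 1)).choose p.1 else 0)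
      = if m ≤ n then pascalDiagSum k m (n - m) else 0 := by
  rw [Finset.sum_ite, Finset.sum_const_zero, add_zero]
  by_cases hmn : m ≤ n
  · rw [if_pos hmn, pds_eq]
    refine Finset.sum_nbij' (i := fun p => (p.1, p.2 - 1)) (j := fun q => (q.1, q.2 + 1))
      ?_ ?_ ?_ ?_ ?_
    · rintro ⟨x, y⟩ hp
      simp only [Finset.mem_filter, mem_diagSet hk hm] at hp
      obtain ⟨hpe, hy⟩ := hp
      rw [mem_diagSet hk hm]
      rcases y with _ | b
      · omega
      · simp only [Nat.add_sub_cancel] at *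
        have : m * (b + 1) = m * b + m := by ring
        omega
    · rintro ⟨x, y⟩ hq
      rw [mem_diagSet hk hm] at hq
      simp only [Finset.mem_filter, mem_diagSet hk hm]
      have : m * (y + 1) = m * y + m := by ring
      simp only at *
      omega
    · rintro ⟨x, y⟩ hp
      simp only [Finset.mem_filter] at hp
      simp only [Prod.mk.injEq]
      exact ⟨trivial, by omega⟩
    · rintro ⟨x, y⟩ hq
      simp
    · intro p hp
      rfl
  · rw [if_neg hmn]
    apply Finset.sum_eq_zero
    rintro ⟨x, y⟩ hp
    simp only [Finset.mem_filter, mem_diagSet hk hm] at hp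
    obtain ⟨hpe, hy⟩ := hp
    have : m * 1 ≤ m * y := Nat.mul_le_mul_left m (by omega)
    omega

private lemma pds_rec (k m n : ℕ) (hk : 1 ≤ k) (hm : 1 ≤ m) (hn : 1 ≤ n) :
    pascalDiagSum k m n
      = (if k ≤ n then pascalDiagSum k m (n - k) else 0)
      + (if m ≤ n then pascalDiagSum k m (n - m) else 0) := by
  rw [← left_shift k m n hk hm, ← right_shift k m n hk hm, pds_eq, ← Finset.sum_add_distrib]
  apply Finset.sum_congr rfl
  rintro ⟨x, y⟩ hp
  rw [mem_diagSet hk hm] at hp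
  simp only at hp ⊢
  match x, y with
  | 0, 0 => omega
  | 0, b + 1 => simp
  | a + 1, 0 => simp
  | a + 1, b + 1 =>
    rw [if_pos (by omega : (1:ℕ) ≤ a + 1), if_pos (by omega : (1:ℕ) ≤ b + 1)]
    have h1 : a + 1 - 1 = a := rfl
    have h2 : b + 1 - 1 = b := rfl
    rw [h1, h2, show a + 1 + (b + 1) = (a + (b + 1)) + 1 from by ring, Nat.choose_succ_succ,
      show a + 1 + b = a + (b + 1) from by ring]

private lemma pds_zero (k m : ℕ) (hk : 1 ≤ k) (hm : 1 ≤ m) : pascalDiagSum k m 0 = 1 := by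
  unfold pascalDiagSum
  rw [Finset.sum_range_one, Finset.sum_range_one]
  simp

theorem division_count_eq_shifted_diag_sum (k m : ℕ) (hk : 1 ≤ k) (hkm : k < m)
    (hcop : Nat.gcd k m = 1) (d : ℕ → ℕ)
    (hd0 : ∀ n < m, d n = 0) (hdm : d m = 1)
    (hdrec : ∀ n ≥ m + 1, d n = d (n - k) + d (n - m)) :
    ∀ n ≥ m, d n = pascalDiagSum k m (n - m) := by
  have hm : 1 ≤ m := by omega
  have key : ∀ j, d (m + j) = pascalDiagSum k m j := by
    intro j
    induction j using Nat.strong_induction_on with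
    | _ j ih =>
      rcases Nat.eq_zero_or_pos j with rfl | hj
      · simpa [pds_zero k m hk hm] using hdm
      · rw [hdrec (m + j) (by omega)]
        rw [pds_rec k m j hk hm hj]
        congr 1
        · by_cases hkj : k ≤ j
          · rw [if_pos hkj, show m + j - k = m + (j - k) from by omega, ih (j - k) (by omega)]
          · rw [if_neg hkj, hd0 (m + j - k) (by omega)]
        · by_cases hmj : m ≤ j
          · rw [if_pos hmj, show m + j - m = m + (j - m) from by omega, ih (j - m) (by omega)]
          · rw [if_neg hmj, show m + j - m = j from by omega, hd0 j (by omega)]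
  intro n hn
  have := key (n - m)
  rwa [show m + (n - m) = n from by omega] at this
end

section
/- Fix coprime integers 1 ≤ k < m, and let r₀ ∈ (0,1) be the unique positive root of 1 − x^k − x^m = 0. Then the fraction of the population with the shorter lifetime converges: lim_{n→∞} b_n / a_n = 1 − r₀^k = r₀^m. -/
/-!
With `p = r₀ ^ k` and `q = r₀ ^ m`, so that `p + q = 1`, the rescaled sequence
`u n = a n * r₀ ^ n` satisfies `u n = p * u (n - k) + q * u (n - m)`: each term is a weighted
average of two earlier ones. Hence the maximum of `u` over a window of `m + 1` consecutive indices
is nonincreasing and tends to some `L`. Conversely, if some term of a late window is `≥ L` while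
all terms are `≤ L + δ`, the averaging forces `u (x - k)` and `u (x - m)` to be within `O(δ)` of
`L`; since `gcd k m = 1`, every gap between `m * k` and `m * k + m` is `s * k + t * m` with
`s + t ≤ m + k`, so this reaches every earlier index with an error `O(δ)`. Thus `u n → L > 0`,
so `a (n - k) / a n → r₀ ^ k`, and since `b n = a n - a (n - k)` the ratio `b n / a n` tends to
`1 - r₀ ^ k`.
-/

open Filter Topology

theorem Nat.exists_eq_mul_add_mul_of_coprime {k m c : ℕ} (hcop : Nat.Coprime k m) (hm : m ≠ 0)
    (hc : (m - 1) * k ≤ c) : ∃ s t, s < m ∧ c = s * k + t * m := by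
  obtain ⟨s, hs, hsc⟩ := Nat.exists_mul_mod_eq_of_coprime c hcop hm
  have hle : s * k ≤ c := le_trans (Nat.mul_le_mul_right k (by omega)) hc
  obtain ⟨t, ht⟩ : m ∣ c - s * k :=
    (Nat.modEq_iff_dvd' hle).mp (by rw [Nat.ModEq, mul_comm, hsc])
  exact ⟨s, t, hs, by rw [mul_comm t]; omega⟩

theorem Nat.iterate_backward_step {P : ℕ → ℕ → Prop} {N d : ℕ}
    (hstep : ∀ y ≥ N, ∀ I, P I (y + d) → P (I + 1) y) (s : ℕ) :
    ∀ y ≥ N, ∀ I, P I (y + s * d) → P (I + s) y := by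
  induction s with
  | zero => simp
  | succ s ih =>
    intro y hy I h
    have h' : P I (y + d + s * d) := by rwa [show y + d + s * d = y + (s + 1) * d by ring]
    exact hstep y hy (I + s) (ih (y + d) (by omega) I h')

theorem sub_div_le_of_sub_le_mul_add_mul {p q x y L e δ : ℝ} (hp : 0 < p) (hq : 0 ≤ q)
    (hpq : p + q = 1) (hδ : 0 ≤ δ) (hy : y ≤ L + δ) (h : L - e ≤ p * x + q * y) :
    L - (e + δ) / p ≤ x := by
  have hqδ : q * δ ≤ δ := mul_le_of_le_one_left hδ (by linarith)
  have hL : p * L + q * L = L := by rw [← add_mul, hpq, one_mul]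
  have key : p * (L - x) ≤ e + δ := by nlinarith [mul_le_mul_of_nonneg_left hy hq]
  linarith [(le_div_iff₀' hp).2 key]

theorem add_div_le_mul_pow_succ {p C δ : ℝ} (hp : 0 < p) (hCp : 2 ≤ C * p) (hC : 1 ≤ C)
    (hδ : 0 ≤ δ) (I : ℕ) : (δ * C ^ I + δ) / p ≤ δ * C ^ (I + 1) := by
  have hδI : δ ≤ δ * C ^ I := le_mul_of_one_le_right hδ (one_le_pow₀ hC)
  rw [div_le_iff₀ hp, pow_succ]
  nlinarith [mul_le_mul_of_nonneg_left hCp (hδ.trans hδI)]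

def windowMax {α : Type*} [LinearOrder α] (u : ℕ → α) (m n : ℕ) : α :=
  (Finset.range (m + 1)).sup' Finset.nonempty_range_add_one fun i => u (n + i)

section windowMax

variable {α : Type*} [LinearOrder α] {u : ℕ → α} {m : ℕ}

theorem le_windowMax {i : ℕ} (hi : i ≤ m) (n : ℕ) : u (n + i) ≤ windowMax u m n :=
  Finset.le_sup' (fun i => u (n + i)) (Finset.mem_range_succ_iff.2 hi)

theorem exists_windowMax_eq (n : ℕ) : ∃ i ≤ m, windowMax u m n = u (n + i) := by
  obtain ⟨i, hi, h⟩ :=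
    Finset.exists_mem_eq_sup' Finset.nonempty_range_add_one fun i => u (n + i)
  exact ⟨i, Finset.mem_range_succ_iff.1 hi, h⟩

end windowMax

section AveragingRecurrence

variable {u : ℕ → ℝ} {p q : ℝ} {k m : ℕ}

theorem windowMax_antitone (hrec : ∀ n ≥ m, u n = p * u (n - k) + q * u (n - m))
    (hp : 0 ≤ p) (hq : 0 ≤ q) (hpq : p + q = 1) (hk : 0 < k) (hkm : k ≤ m) :
    Antitone (windowMax u m) := by
  refine antitone_nat_of_succ_le fun n => Finset.sup'_le _ _ fun i hi => ?_
  rcases (Finset.mem_range_succ_iff.1 hi).lt_or_eq with hi | rfl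
  · simpa only [add_right_comm, add_assoc] using le_windowMax (u := u) hi n
  · have hx : u (n + (i + 1 - k)) ≤ windowMax u i n := le_windowMax (by omega) n
    have hy : u (n + 1) ≤ windowMax u i n := le_windowMax (by omega) n
    calc u (n + 1 + i) = p * u (n + (i + 1 - k)) + q * u (n + 1) := by
          rw [hrec _ (by omega), show n + 1 + i - i = n + 1 by omega,
            show n + 1 + i - k = n + (i + 1 - k) by omega]
      _ ≤ p * windowMax u i n + q * windowMax u i n := by gcongr
      _ = windowMax u i n := by rw [← add_mul, hpq, one_mul]

theorem le_of_forall_lt_le (hrec : ∀ n ≥ m, u n = p * u (n - k) + q * u (n - m))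
    (hp : 0 ≤ p) (hq : 0 ≤ q) (hpq : p + q = 1) (hk : 0 < k) (hkm : k ≤ m) {c : ℝ}
    (hinit : ∀ n < m, c ≤ u n) (n : ℕ) : c ≤ u n := by
  induction n using Nat.strong_induction_on with
  | _ n ih =>
    rcases lt_or_ge n m with hn | hn
    · exact hinit n hn
    · calc c = p * c + q * c := by rw [← add_mul, hpq, one_mul]
        _ ≤ p * u (n - k) + q * u (n - m) := by
          gcongr <;> exact ih _ (by omega)
        _ = u n := (hrec n hn).symm

theorem sub_mul_pow_le_of_recurrence (hrec : ∀ n ≥ m, u n = p * u (n - k) + q * u (n - m))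
    (hp : 0 < p) (hq : 0 < q) (hpq : p + q = 1) (hkm : k < m) (hcop : Nat.Coprime k m)
    {C L δ : ℝ} (hCp : 2 ≤ C * p) (hCq : 2 ≤ C * q) (hδ : 0 ≤ δ) {N : ℕ}
    (hupper : ∀ n ≥ N, u n ≤ L + δ) (hlower : ∀ n, ∃ i ≤ m, L ≤ u (n + i)) :
    ∀ n ≥ N + m, L - δ * C ^ (m + k) ≤ u n := by
  have hC : 1 ≤ C := by nlinarith
  let P (I y : ℕ) : Prop := L - δ * C ^ I ≤ u y
  have step : ∀ y ≥ m, N ≤ y - k → N ≤ y - m → ∀ I,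
      P I y → P (I + 1) (y - k) ∧ P (I + 1) (y - m) := by
    intro y hy hyk hym I h
    simp only [P] at h ⊢
    rw [hrec y hy] at h
    refine ⟨le_trans ?_ (sub_div_le_of_sub_le_mul_add_mul hp hq.le hpq hδ (hupper _ hym) h),
      le_trans ?_ (sub_div_le_of_sub_le_mul_add_mul hq hp.le (by linarith) hδ (hupper _ hyk)
        (h.trans_eq (add_comm _ _)))⟩
    · linarith [add_div_le_mul_pow_succ hp hCp hC hδ I]
    · linarith [add_div_le_mul_pow_succ hq hCq hC hδ I]
  have step_k : ∀ y ≥ N + m, ∀ I, P I (y + k) → P (I + 1) y := fun y hy I h => by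
    simpa using (step (y + k) (by omega) (by omega) (by omega) I h).1
  have step_m : ∀ y ≥ N + m, ∀ I, P I (y + m) → P (I + 1) y := fun y hy I h => by
    simpa using (step (y + m) (by omega) (by omega) (by omega) I h).2
  intro n hn
  obtain ⟨i, hi, hLi⟩ := hlower (n + m * k)
  obtain ⟨s, t, hs, hst⟩ :=
    Nat.exists_eq_mul_add_mul_of_coprime hcop (by omega)
      (le_add_right (Nat.mul_le_mul_right k (Nat.sub_le m 1)))
  have ht : t ≤ k + 1 := Nat.le_of_mul_le_mul_right (a := t) (c := m) (by nlinarith) (by omega)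
  have h0 : P 0 (n + t * m + s * k) := by
    simp only [P, pow_zero, mul_one]
    rw [show n + t * m + s * k = n + m * k + i by linarith]
    linarith
  have h1 : P s (n + t * m) := by
    simpa using Nat.iterate_backward_step step_k s (n + t * m) (by omega) 0 h0
  have h2 : P (s + t) n := Nat.iterate_backward_step step_m t n hn s h1
  have hpow : C ^ (s + t) ≤ C ^ (m + k) := pow_le_pow_right₀ hC (by omega)
  linarith [mul_le_mul_of_nonneg_left hpow hδ]

theorem exists_tendsto_of_recurrence (hrec : ∀ n ≥ m, u n = p * u (n - k) + q * u (n - m))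
    (hp : 0 < p) (hq : 0 < q) (hpq : p + q = 1) (hk : 0 < k) (hkm : k < m)
    (hcop : Nat.Coprime k m) (hbdd : BddBelow (Set.range u)) :
    ∃ L, Tendsto u atTop (𝓝 L) := by
  have hanti := windowMax_antitone hrec hp.le hq.le hpq hk hkm.le
  have hle : ∀ n, u n ≤ windowMax u m n := le_windowMax (Nat.zero_le m)
  obtain ⟨c, hc⟩ := hbdd
  have hMbdd : BddBelow (Set.range (windowMax u m)) :=
    ⟨c, Set.forall_mem_range.2 fun n => (hc ⟨n, rfl⟩).trans (hle n)⟩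
  set L := ⨅ n, windowMax u m n
  have hM : Tendsto (windowMax u m) atTop (𝓝 L) := tendsto_atTop_ciInf hanti hMbdd
  have hlower : ∀ n, ∃ i ≤ m, L ≤ u (n + i) := fun n => by
    obtain ⟨i, hi, h⟩ := exists_windowMax_eq (u := u) (m := m) n
    exact ⟨i, hi, h ▸ ciInf_le hMbdd n⟩
  set C := 2 / p + 2 / q
  have hCp : 2 ≤ C * p := by
    rw [add_mul, div_mul_cancel₀ _ hp.ne']
    exact le_add_of_nonneg_right (by positivity)
  have hCq : 2 ≤ C * q := by
    rw [add_mul, div_mul_cancel₀ _ hq.ne']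
    exact le_add_of_nonneg_left (by positivity)
  refine ⟨L, tendsto_order.2 ⟨fun a ha => ?_, fun b hb => ?_⟩⟩
  · set δ := (L - a) / (2 * C ^ (m + k))
    have hδ : 0 < δ := by positivity
    obtain ⟨N, hN⟩ :=
      eventually_atTop.1 (hM.eventually (gt_mem_nhds (lt_add_of_pos_right L hδ)))
    filter_upwards [eventually_ge_atTop (N + m)] with n hn
    have := sub_mul_pow_le_of_recurrence hrec hp hq hpq hkm hcop hCp hCq hδ.le
      (fun n hn => (hle n).trans (hN n hn).le) hlower n hn
    have hC : 0 < C := by positivity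
    have hδC : δ * C ^ (m + k) = (L - a) / 2 := by
      simp only [δ]; field_simp
    linarith
  · filter_upwards [hM.eventually (gt_mem_nhds hb)] with n hn
    exact (hle n).trans_lt hn

end AveragingRecurrence

theorem mul_pow_eq_of_recurrence {a : ℕ → ℝ} {k m : ℕ} (hkm : k ≤ m)
    (harec : ∀ n ≥ m, a n = a (n - k) + a (n - m)) (r : ℝ) (n : ℕ) (hn : m ≤ n) :
    a n * r ^ n = r ^ k * (a (n - k) * r ^ (n - k)) + r ^ m * (a (n - m) * r ^ (n - m)) := by
  rw [harec n hn, mul_left_comm, ← pow_add, Nat.add_sub_cancel' (by omega), mul_left_comm,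
    ← pow_add, Nat.add_sub_cancel' hn, add_mul]

theorem tendsto_div_of_tendsto_mul_pow {a : ℕ → ℝ} {r L : ℝ} (hr : r ≠ 0) (hL : L ≠ 0)
    (h : Tendsto (fun n => a n * r ^ n) atTop (𝓝 L)) (k : ℕ) :
    Tendsto (fun n => a (n - k) / a n) atTop (𝓝 (r ^ k)) := by
  have hratio := ((h.comp (tendsto_sub_atTop_nat k)).div h hL).const_mul (r ^ k)
  rw [div_self hL, mul_one] at hratio
  refine hratio.congr' ((eventually_ge_atTop k).mono fun n hn => ?_)
  have hpow : r ^ k * r ^ (n - k) = r ^ n := by rw [← pow_add, Nat.add_sub_cancel' hn]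
  show r ^ k * (a (n - k) * r ^ (n - k) / (a n * r ^ n)) = a (n - k) / a n
  rw [mul_div_assoc', ← mul_assoc, mul_comm _ (a (n - k)), mul_assoc, hpow,
    mul_div_mul_right _ _ (pow_ne_zero n hr)]

theorem eq_sub_of_recurrence {k m : ℕ} {a b : ℕ → ℝ} (hk : 0 < k) (hkm : k ≤ m)
    (ha0 : ∀ n < m, a n = 1) (harec : ∀ n ≥ m, a n = a (n - k) + a (n - m))
    (hb0 : ∀ n < m, b n = 0) (hb1 : ∀ n, m ≤ n → n ≤ m + k - 1 → b n = 1)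
    (hbrec : ∀ n ≥ m + k, b n = b (n - k) + b (n - m)) (n : ℕ) :
    b n = a n - a (n - k) := by
  induction n using Nat.strong_induction_on with
  | _ n ih =>
    rcases lt_or_ge n m with h | h
    · rw [hb0 n h, ha0 n h, ha0 (n - k) (by omega), sub_self]
    rcases lt_or_ge n (m + k) with h' | h'
    · rw [hb1 n h (by omega), harec n h, ha0 (n - m) (by omega), add_sub_cancel_left]
    · rw [hbrec n h', ih (n - k) (by omega), ih (n - m) (by omega), harec n h,
        harec (n - k) (by omega), show n - m - k = n - k - m by omega]
      ring

theorem short_lifetime_fraction_limit (k m : ℕ) (hk : 1 ≤ k) (hkm : k < m)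
    (hcop : Nat.gcd k m = 1) (a b : ℕ → ℝ)
    (ha0 : ∀ n < m, a n = 1)
    (harec : ∀ n ≥ m, a n = a (n - k) + a (n - m))
    (hb0 : ∀ n < m, b n = 0)
    (hb1 : ∀ n, m ≤ n → n ≤ m + k - 1 → b n = 1)
    (hbrec : ∀ n ≥ m + k, b n = b (n - k) + b (n - m))
    (r₀ : ℝ) (hr0 : 0 < r₀) (hr1 : r₀ < 1) (hroot : r₀ ^ k + r₀ ^ m = 1) :
    Tendsto (fun n : ℕ => b n / a n) atTop (nhds (1 - r₀ ^ k)) ∧ 1 - r₀ ^ k = r₀ ^ m := by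
  refine ⟨?_, by linarith⟩
  set u : ℕ → ℝ := fun n => a n * r₀ ^ n
  have hurec : ∀ n ≥ m, u n = r₀ ^ k * u (n - k) + r₀ ^ m * u (n - m) :=
    mul_pow_eq_of_recurrence hkm.le harec r₀
  have hu : ∀ n, r₀ ^ m ≤ u n :=
    le_of_forall_lt_le hurec (by positivity) (by positivity) hroot hk hkm.le fun n hn => by
      simpa [u, ha0 n hn] using pow_le_pow_of_le_one hr0.le hr1.le hn.le
  obtain ⟨L, hL⟩ := exists_tendsto_of_recurrence hurec (pow_pos hr0 k) (pow_pos hr0 m) hroot hk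
    hkm hcop ⟨r₀ ^ m, Set.forall_mem_range.2 hu⟩
  have hL0 : 0 < L := (pow_pos hr0 m).trans_le (ge_of_tendsto' hL hu)
  have ha : ∀ n, 0 < a n := fun n =>
    pos_of_mul_pos_left ((pow_pos hr0 m).trans_le (hu n)) (pow_pos hr0 n).le
  refine (tendsto_const_nhds.sub (tendsto_div_of_tendsto_mul_pow hr0.ne' hL0.ne' hL k)).congr
    fun n => ?_
  rw [eq_sub_of_recurrence hk hkm.le ha0 harec hb0 hb1 hbrec, sub_div, div_self (ha n).ne']
end
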